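/- Let X be a real random variable with Cramér rate function I(x) = sup_{λ∈ℝ} (λx - log E[e^{λX}]). If x ∈ ℝ satisfies I(x) < ∞ and I(x+ε) = ∞ for all ε > 0, then P(X = x) = e^{-I(x)}. -/

import Mathlib

open MeasureTheory

/-- The Cramér rate function (Legendre transform of the log moment generating
function), valued in `EReal` so that it may be infinite. -/
noncomputable def cramerRate {Ω : Type*} [MeasurableSpace Ω] (μ : Measure Ω)
    (X : Ω → ℝ) (x : ℝ) : EReal :=
  ⨆ l : ℝ, ((l * x : ℝ) : EReal) -
    ENNReal.log (∫⁻ ω, ENNReal.ofReal (Real.exp (l * X ω)) ∂μ)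

/-!
Centring the exponential, `I(x) = sup_l -log E[exp (l (X - x))]`. Every term is at most
`-log P(X = x)`, since the integrand is `1` on `{X = x}`. If `X` had mass on `{X ≥ y}` for some
`y > x`, then `I(y)` would be bounded by `max (I x) (-log P(X ≥ y))`: nonnegative slopes see that
mass, nonpositive ones are dominated by the terms of `I(x)`. Hence `X ≤ x` almost surely, and then
`E[exp (n (X - x))]` tends to `P(X = x)` by dominated convergence, which gives the reverse bound.
-/

open Filter Topology

section CramerRate

variable {Ω : Type*} [MeasurableSpace Ω] {μ : Measure Ω} {X : Ω → ℝ}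

lemma cramerRate_eq_iSup_neg_log_lintegral (μ : Measure Ω) (X : Ω → ℝ) (x : ℝ) :
    cramerRate μ X x =
      ⨆ l : ℝ, -ENNReal.log (∫⁻ ω, ENNReal.ofReal (Real.exp (l * (X ω - x))) ∂μ) := by
  refine iSup_congr fun l => ?_
  have hsplit : ∀ ω, ENNReal.ofReal (Real.exp (l * (X ω - x))) =
      ENNReal.ofReal (Real.exp (l * X ω)) * ENNReal.ofReal (Real.exp (-(l * x))) := fun ω => by
    rw [← ENNReal.ofReal_mul (Real.exp_pos _).le, ← Real.exp_add, mul_sub, sub_eq_add_neg]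
  simp_rw [hsplit]
  rw [lintegral_mul_const' _ _ ENNReal.ofReal_ne_top, ENNReal.log_mul_add,
    ENNReal.log_ofReal_of_pos (Real.exp_pos _), Real.log_exp,
    EReal.neg_add (.inr (EReal.coe_ne_top _)) (.inr (EReal.coe_ne_bot _)),
    EReal.coe_neg, sub_eq_add_neg, sub_eq_add_neg, neg_neg, add_comm]

lemma neg_log_lintegral_le_cramerRate (l x : ℝ) :
    -ENNReal.log (∫⁻ ω, ENNReal.ofReal (Real.exp (l * (X ω - x))) ∂μ) ≤ cramerRate μ X x := by
  rw [cramerRate_eq_iSup_neg_log_lintegral]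
  exact le_iSup (fun l : ℝ => -ENNReal.log (∫⁻ ω, ENNReal.ofReal (Real.exp (l * (X ω - x))) ∂μ)) l

lemma measure_le_lintegral_exp {f : Ω → ℝ} (hf : Measurable f) {s : Set Ω}
    (hs : ∀ ω ∈ s, 0 ≤ f ω) :
    μ s ≤ ∫⁻ ω, ENNReal.ofReal (Real.exp (f ω)) ∂μ := by
  calc μ s ≤ μ {ω | 1 ≤ ENNReal.ofReal (Real.exp (f ω))} :=
        measure_mono fun ω hω => by simpa using Real.one_le_exp (hs ω hω)
    _ ≤ ∫⁻ ω, ENNReal.ofReal (Real.exp (f ω)) ∂μ := by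
        simpa using mul_meas_ge_le_lintegral₀ hf.exp.ennreal_ofReal.aemeasurable 1

lemma cramerRate_le_neg_log_measure_eq (hX : Measurable X) (x : ℝ) :
    cramerRate μ X x ≤ -ENNReal.log (μ {ω | X ω = x}) := by
  rw [cramerRate_eq_iSup_neg_log_lintegral]
  refine iSup_le fun l => EReal.neg_le_neg_iff.2 (ENNReal.log_monotone ?_)
  exact measure_le_lintegral_exp (by fun_prop) fun ω (hω : X ω = x) => by simp [hω]

lemma cramerRate_le_max (hX : Measurable X) {x y : ℝ} (hxy : x ≤ y) :
    cramerRate μ X y ≤ max (cramerRate μ X x) (-ENNReal.log (μ {ω | y ≤ X ω})) := by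
  rw [cramerRate_eq_iSup_neg_log_lintegral]
  refine iSup_le fun l => ?_
  rcases le_total 0 l with hl | hl
  · refine le_max_of_le_right (EReal.neg_le_neg_iff.2 (ENNReal.log_monotone ?_))
    exact measure_le_lintegral_exp (by fun_prop) fun ω (hω : y ≤ X ω) =>
      mul_nonneg hl (sub_nonneg.2 hω)
  · refine le_max_of_le_left (le_trans ?_ (neg_log_lintegral_le_cramerRate l x))
    refine EReal.neg_le_neg_iff.2 (ENNReal.log_monotone (lintegral_mono fun ω => ?_))
    exact ENNReal.ofReal_le_ofReal (Real.exp_le_exp.2 (by nlinarith))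

lemma measure_le_eq_zero_of_cramerRate_eq_top (hX : Measurable X) {x y : ℝ} (hxy : x ≤ y)
    (hx : cramerRate μ X x ≠ ⊤) (hy : cramerRate μ X y = ⊤) :
    μ {ω | y ≤ X ω} = 0 := by
  have := cramerRate_le_max (μ := μ) hX hxy
  rwa [hy, top_le_iff, max_eq_top, or_iff_right hx, EReal.neg_eq_top_iff,
    ENNReal.log_eq_bot_iff] at this

lemma ae_le_of_cramerRate_ne_top_of_eq_top (hX : Measurable X) {x : ℝ}
    (hfin : cramerRate μ X x ≠ ⊤) (hinf : ∀ ε : ℝ, 0 < ε → cramerRate μ X (x + ε) = ⊤) :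
    ∀ᵐ ω ∂μ, X ω ≤ x := by
  have hlt : ∀ n : ℕ, ∀ᵐ ω ∂μ, X ω < x + 1 / (n + 1) := fun n => by
    have hε : (0 : ℝ) < 1 / (n + 1) := Nat.one_div_pos_of_nat
    rw [ae_iff]
    simpa using measure_le_eq_zero_of_cramerRate_eq_top hX (by linarith) hfin (hinf _ hε)
  filter_upwards [ae_all_iff.2 hlt] with ω hω
  refine le_of_forall_pos_lt_add fun ε hε => ?_
  obtain ⟨n, hn⟩ := exists_nat_one_div_lt hε
  linarith [hω n]

lemma tendsto_lintegral_exp_mul_sub (hX : Measurable X) [IsFiniteMeasure μ] {x : ℝ}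
    (hle : ∀ᵐ ω ∂μ, X ω ≤ x) :
    Tendsto (fun n : ℕ => ∫⁻ ω, ENNReal.ofReal (Real.exp (n * (X ω - x))) ∂μ) atTop
      (𝓝 (μ {ω | X ω = x})) := by
  have hs : MeasurableSet {ω | X ω = x} := hX (measurableSet_singleton x)
  rw [← lintegral_indicator_one hs]
  refine tendsto_lintegral_of_dominated_convergence 1 (fun n => by fun_prop) (fun n => ?_)
    (by simp) ?_
  · filter_upwards [hle] with ω hω
    simpa using mul_nonpos_of_nonneg_of_nonpos n.cast_nonneg (sub_nonpos.2 hω)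
  · filter_upwards [hle] with ω hω
    rcases hω.eq_or_lt with heq | hlt
    · simp [heq]
    · simp only [Set.indicator_of_notMem (show ω ∉ {ω | X ω = x} from hlt.ne)]
      have := Real.tendsto_exp_atBot.comp
        (tendsto_natCast_atTop_atTop.atTop_mul_const_of_neg (sub_neg.2 hlt))
      simpa [Function.comp_def] using (ENNReal.continuous_ofReal.tendsto 0).comp this

lemma neg_log_measure_eq_le_cramerRate (hX : Measurable X) [IsFiniteMeasure μ] {x : ℝ}
    (hle : ∀ᵐ ω ∂μ, X ω ≤ x) :
    -ENNReal.log (μ {ω | X ω = x}) ≤ cramerRate μ X x :=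
  le_of_tendsto' ((ENNReal.continuous_log.tendsto _).comp
    (tendsto_lintegral_exp_mul_sub hX hle)).neg fun n => neg_log_lintegral_le_cramerRate n x

end CramerRate

theorem stmt7 {Ω : Type*} [MeasurableSpace Ω] (μ : Measure Ω) [IsProbabilityMeasure μ]
    (X : Ω → ℝ) (hX : Measurable X) (x : ℝ)
    (hfin : cramerRate μ X x ≠ ⊤)
    (hinf : ∀ ε : ℝ, 0 < ε → cramerRate μ X (x + ε) = ⊤) :
    μ {ω | X ω = x} = ENNReal.ofReal (Real.exp (-(cramerRate μ X x).toReal)) := by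
  have hle := ae_le_of_cramerRate_ne_top_of_eq_top hX hfin hinf
  have hrate : cramerRate μ X x = -ENNReal.log (μ {ω | X ω = x}) :=
    le_antisymm (cramerRate_le_neg_log_measure_eq hX x) (neg_log_measure_eq_le_cramerRate hX hle)
  have hpos : μ {ω | X ω = x} ≠ 0 := fun h0 => hfin (by simp [hrate, h0])
  rw [hrate, ENNReal.log_pos_real hpos (measure_ne_top _ _), ← EReal.coe_neg, EReal.toReal_coe,
    neg_neg, Real.exp_log (ENNReal.toReal_pos hpos (measure_ne_top _ _)), ENNReal.ofReal_toReal
    (measure_ne_top _ _)]
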